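/- arXiv:1504.06476 — 5 statements merged into one kernel-verified Lean document; each statement's English description precedes it below -/
import Mathlib

section
/- Let E be a real normed vector space, L : E ≃L[ℝ] E a continuous linear equivalence, p a real number, and N : E → E positively homogeneous of degree p and Fréchet differentiable at u* ∈ E. If L u* = N(u*), then the continuous linear map S := L⁻¹ ∘ (fderiv N u*) satisfies S u* = p • u*. In particular, if u* ≠ 0, then p is an eigenvalue of S with eigenvector u* (this is the eigenvalue of magnitude |p| > 1 that makes the classical fixed-point iteration u_{n+1} = L⁻¹ N(u_n) fail to converge). -/
/-!
Differentiating the homogeneity relation `N (t • u) = t ^ p • N u` at `t = 1` gives Euler's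
identity `N'(u) u = p • N u`. At a solution, `N u* = L u*`, so applying `L⁻¹` turns Euler's
identity into `S u* = p • u*`.
-/

section EulerIdentity

variable {E F : Type*} [NormedAddCommGroup E] [NormedSpace ℝ E]
  [NormedAddCommGroup F] [NormedSpace ℝ F]

theorem HasFDerivAt.apply_self_eq_smul_of_homogeneous {N : E → F} {N' : E →L[ℝ] F} {x : E}
    {p : ℝ} (hN : ∀ t : ℝ, 0 < t → N (t • x) = t ^ p • N x) (hN' : HasFDerivAt N N' x) :
    N' x = p • N x := by
  have h_comp : HasDerivAt (fun t : ℝ => N (t • x)) (N' x) 1 := by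
    have hline : HasDerivAt (fun t : ℝ => t • x) x 1 := by
      simpa using (hasDerivAt_id (1 : ℝ)).smul_const x
    exact (one_smul ℝ x ▸ hN').comp_hasDerivAt 1 hline
  have h_pow : HasDerivAt (fun t : ℝ => t ^ p • N x) (p • N x) 1 := by
    simpa using (Real.hasDerivAt_rpow_const (p := p) (Or.inl one_ne_zero)).smul_const (N x)
  have h_eq : (fun t : ℝ => N (t • x)) =ᶠ[nhds 1] fun t => t ^ p • N x :=
    Filter.eventually_of_mem (lt_mem_nhds one_pos) hN
  exact (h_comp.congr_of_eventuallyEq h_eq.symm).unique h_pow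

theorem fderiv_apply_self_eq_smul_of_homogeneous {N : E → F} {x : E} {p : ℝ}
    (hN : ∀ t : ℝ, 0 < t → N (t • x) = t ^ p • N x) (hdiff : DifferentiableAt ℝ N x) :
    fderiv ℝ N x x = p • N x :=
  hdiff.hasFDerivAt.apply_self_eq_smul_of_homogeneous hN

end EulerIdentity

/-- If `L u* = N u*` with `N` positively homogeneous of degree `p` and differentiable at
`u*`, then `S = L⁻¹ ∘ N'(u*)` satisfies `S u* = p • u*`; in particular if `u* ≠ 0` then
`p` is an eigenvalue of `S` with eigenvector `u*`. -/
theorem degree_is_eigenvalue_of_iteration_matrix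
    {E : Type*} [NormedAddCommGroup E] [NormedSpace ℝ E]
    (L : E ≃L[ℝ] E) (p : ℝ) (N : E → E)
    (hN : ∀ t : ℝ, 0 < t → ∀ x : E, N (t • x) = t ^ p • N x)
    (ustar : E) (hdiff : DifferentiableAt ℝ N ustar)
    (hsol : L ustar = N ustar) :
    ((L.symm : E →L[ℝ] E).comp (fderiv ℝ N ustar)) ustar = p • ustar ∧
    (ustar ≠ 0 →
      Module.End.HasEigenvector
        (((L.symm : E →L[ℝ] E).comp (fderiv ℝ N ustar) : E →L[ℝ] E) : E →ₗ[ℝ] E)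
        p ustar) := by
  have h_euler := fderiv_apply_self_eq_smul_of_homogeneous (fun t ht => hN t ht ustar) hdiff
  have h_fixed : ((L.symm : E →L[ℝ] E).comp (fderiv ℝ N ustar)) ustar = p • ustar := by
    rw [ContinuousLinearMap.comp_apply, h_euler, ← hsol, map_smul, ContinuousLinearEquiv.coe_coe,
      L.symm_apply_apply]
  exact ⟨h_fixed, fun hne => ⟨Module.End.mem_eigenspace_iff.mpr h_fixed, hne⟩⟩
end

section
/- Let E be a real inner product space, L : E → E a linear map, N : E → E, and γ ∈ ℝ with γ ≠ 1. Suppose y ∈ E satisfies ⟨N(y), y⟩ ≠ 0, r := ⟨L y, y⟩ / ⟨N(y), y⟩ > 0, and L y = r^γ • N(y) (i.e., y is a fixed point of the Petviashvili iteration, L y = s(y) • N(y) with s(y) = r^γ). Then r = 1, hence s(y) = 1 and L y = N(y); that is, every such fixed point of the Petviashvili iteration is a solution of the original system. -/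
/-! At a fixed point `L y = r ^ γ • N y`; pairing with `y` gives `⟨L y, y⟩ = r ^ γ ⟨N y, y⟩`,
i.e. `r = r ^ γ`. Since `r > 0` and `γ ≠ 1`, injectivity of `t ↦ r ^ t` for `r ≠ 1` forces
`r = 1`. -/

theorem Real.eq_one_of_rpow_eq_self {x γ : ℝ} (hx : 0 < x) (hγ : γ ≠ 1) (h : x ^ γ = x) :
    x = 1 := by
  by_contra hx₁
  exact hγ ((Real.rpow_right_inj hx hx₁).mp (h.trans (Real.rpow_one x).symm))

theorem real_inner_div_eq_of_eq_smul {E : Type*} [NormedAddCommGroup E] [InnerProductSpace ℝ E]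
    {u v y : E} {c : ℝ} (huv : u = c • v) (hv : (inner ℝ v y : ℝ) ≠ 0) :
    (inner ℝ u y : ℝ) / (inner ℝ v y : ℝ) = c := by
  rw [huv, real_inner_smul_left, mul_div_cancel_right₀ c hv]

theorem fixed_point_of_petviashvili_is_solution_general
    {E : Type*} [NormedAddCommGroup E] [InnerProductSpace ℝ E]
    (L : E →ₗ[ℝ] E) (N : E → E) (γ : ℝ) (hγ : γ ≠ 1)
    (y : E)
    (hpos : 0 < (inner ℝ (L y) y : ℝ) / (inner ℝ (N y) y : ℝ))
    (hfix : L y = (((inner ℝ (L y) y : ℝ) / (inner ℝ (N y) y : ℝ)) ^ γ) • N y) :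
    (inner ℝ (L y) y : ℝ) / (inner ℝ (N y) y : ℝ) = 1 ∧
    ((inner ℝ (L y) y : ℝ) / (inner ℝ (N y) y : ℝ)) ^ γ = 1 ∧
    L y = N y := by
  set r : ℝ := (inner ℝ (L y) y : ℝ) / (inner ℝ (N y) y : ℝ)
  have hne : (inner ℝ (N y) y : ℝ) ≠ 0 := (div_ne_zero_iff.mp hpos.ne').2
  have hrγ : r ^ γ = r := (real_inner_div_eq_of_eq_smul hfix hne).symm
  have hr₁ : r = 1 := Real.eq_one_of_rpow_eq_self hpos hγ hrγ
  refine ⟨hr₁, hrγ.trans hr₁, ?_⟩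
  rw [hfix, hrγ, hr₁, one_smul]

/-- Every fixed point of the Petviashvili iteration (with `γ ≠ 1`, `⟨N y, y⟩ ≠ 0` and
positive ratio `r = ⟨L y, y⟩ / ⟨N y, y⟩`) is a solution of the original system:
`r = 1`, hence `s(y) = 1` and `L y = N y`. -/
theorem fixed_point_of_petviashvili_is_solution
    {E : Type*} [NormedAddCommGroup E] [InnerProductSpace ℝ E]
    (L : E →ₗ[ℝ] E) (N : E → E) (γ : ℝ) (hγ : γ ≠ 1)
    (y : E) (hne : (inner ℝ (N y) y : ℝ) ≠ 0)
    (hpos : 0 < (inner ℝ (L y) y : ℝ) / (inner ℝ (N y) y : ℝ))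
    (hfix : L y = (((inner ℝ (L y) y : ℝ) / (inner ℝ (N y) y : ℝ)) ^ γ) • N y) :
    (inner ℝ (L y) y : ℝ) / (inner ℝ (N y) y : ℝ) = 1 ∧
    ((inner ℝ (L y) y : ℝ) / (inner ℝ (N y) y : ℝ)) ^ γ = 1 ∧
    L y = N y :=
  fixed_point_of_petviashvili_is_solution_general L N γ hγ y hpos hfix
end

section
/- Let E be a real normed vector space, L : E ≃L[ℝ] E a continuous linear equivalence, p and q real numbers, N : E → E positively homogeneous of degree p and Fréchet differentiable at u*, and s : E → ℝ positively homogeneous of degree q and Fréchet differentiable at u*. Suppose L u* = N(u*) and s(u*) = 1, and let F(x) = s(x) • L⁻¹(N(x)). Then F is differentiable at u* and (fderiv F u*)(u*) = (p + q) • u*; that is, the stabilizing factor transforms the eigenvalue p of the classical fixed-point iteration matrix into the eigenvalue p + q of the Petviashvili-type iteration matrix, with the same eigenvector u*. -/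
/-!
The Petviashvili operator `F x = s x • L⁻¹ (N x)` is itself positively homogeneous of degree
`p + q` and fixes `u*`, so Euler's identity `F' u* u* = (p + q) • F u*` is the claim.
-/

/-- Euler's identity: differentiating `t ↦ N (t • u) = t ^ p • N u` at `t = 1`. -/
theorem fderiv_apply_self_of_posHomogeneous
    {E F : Type*} [NormedAddCommGroup E] [NormedSpace ℝ E]
    [NormedAddCommGroup F] [NormedSpace ℝ F]
    {N : E → F} {p : ℝ} (hN : ∀ t : ℝ, 0 < t → ∀ x : E, N (t • x) = t ^ p • N x)
    {u : E} (hd : DifferentiableAt ℝ N u) :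
    fderiv ℝ N u u = p • N u := by
  have h_ray : HasDerivAt (fun t : ℝ => t • u) u 1 := by
    simpa using (hasDerivAt_id (1 : ℝ)).smul_const u
  have h_comp : HasDerivAt (fun t : ℝ => N (t • u)) (fderiv ℝ N u u) 1 :=
    hd.hasFDerivAt.comp_hasDerivAt_of_eq 1 h_ray (one_smul ℝ u).symm
  have h_rpow : HasDerivAt (fun t : ℝ => t ^ p • N u) (p • N u) 1 := by
    simpa using (Real.hasDerivAt_rpow_const (p := p) (Or.inl one_ne_zero)).smul_const (N u)
  have h_eq : (fun t : ℝ => N (t • u)) =ᶠ[nhds 1] fun t => t ^ p • N u := by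
    filter_upwards [Ioi_mem_nhds zero_lt_one] with t ht using hN t ht u
  exact h_comp.unique (h_rpow.congr_of_eventuallyEq h_eq)

/-- The stabilizing factor transforms the eigenvalue `p` of the classical fixed-point
iteration matrix into the eigenvalue `p + q` of the Petviashvili-type iteration matrix,
with the same eigenvector `u*`: `(fderiv F u*) u* = (p + q) • u*`. -/
theorem petviashvili_eigenvalue_shift
    {E : Type*} [NormedAddCommGroup E] [NormedSpace ℝ E]
    (L : E ≃L[ℝ] E) (p q : ℝ) (N : E → E) (s : E → ℝ)
    (hN : ∀ t : ℝ, 0 < t → ∀ x : E, N (t • x) = t ^ p • N x)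
    (hs : ∀ t : ℝ, 0 < t → ∀ x : E, s (t • x) = t ^ q * s x)
    (ustar : E)
    (hNdiff : DifferentiableAt ℝ N ustar)
    (hsdiff : DifferentiableAt ℝ s ustar)
    (hsol : L ustar = N ustar) (hs1 : s ustar = 1) :
    DifferentiableAt ℝ (fun x => s x • L.symm (N x)) ustar ∧
    fderiv ℝ (fun x => s x • L.symm (N x)) ustar ustar = (p + q) • ustar := by
  have hF_diff : DifferentiableAt ℝ (fun x => s x • L.symm (N x)) ustar :=
    hsdiff.smul (L.symm.differentiableAt.comp ustar hNdiff)
  have hF_hom : ∀ t : ℝ, 0 < t → ∀ x : E,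
      s (t • x) • L.symm (N (t • x)) = t ^ (p + q) • (s x • L.symm (N x)) := by
    intro t ht x
    rw [hN t ht, hs t ht, map_smul, smul_smul, smul_smul, Real.rpow_add ht]
    ring_nf
  have hF_fixed : s ustar • L.symm (N ustar) = ustar := by
    rw [hs1, ← hsol, L.symm_apply_apply, one_smul]
  refine ⟨hF_diff, ?_⟩
  rw [fderiv_apply_self_of_posHomogeneous hF_hom hF_diff, hF_fixed]
end

section
/- Let E be a real inner product space, L : E ≃L[ℝ] E a continuous linear equivalence, p ∈ ℝ with p ≠ 1, and N : E → E positively homogeneous of degree p and Fréchet differentiable at u*. Suppose L u* = N(u*) and ⟨N(u*), u*⟩ ≠ 0. Let γ = p/(p−1), s(x) = (⟨L x, x⟩ / ⟨N(x), x⟩)^γ, and F(x) = s(x) • L⁻¹(N(x)) (the classical Petviashvili method with the optimal exponent). Then F is differentiable at u* and (fderiv F u*)(u*) = 0; that is, with γ = p/(p−1) the dominant eigenvalue p of the classical fixed-point iteration is filtered to the eigenvalue 0 of the Petviashvili iteration matrix. -/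
/-!
Along the ray through a fixed point `u = L⁻¹ N(u)` the Rayleigh-type quotient `⟨L x, x⟩ / ⟨N x, x⟩`
scales like `t ^ (1 - p)` and `L⁻¹ N` like `t ^ p`, so the Petviashvili map is homogeneous of degree
`p + (1 - p) γ` there. Euler's identity for homogeneous maps makes `u` an eigenvector of its
derivative with exactly this eigenvalue, which vanishes for `γ = p / (p - 1)`.
-/

open scoped RealInnerProductSpace

universe u v

section Euler

variable {E : Type u} {F : Type v} [NormedAddCommGroup E] [NormedSpace ℝ E]
  [NormedAddCommGroup F] [NormedSpace ℝ F]

theorem HasFDerivAt.apply_self_eq_of_homogeneous {f : E → F} {f' : E →L[ℝ] F} {x : E} {k : ℝ}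
    (hf : HasFDerivAt f f' x) (hom : ∀ t : ℝ, 0 < t → f (t • x) = t ^ k • f x) :
    f' x = k • f x := by
  have hray : HasDerivAt (fun t : ℝ => f (t • x)) (f' x) 1 := by
    have hline : HasDerivAt (fun t : ℝ => t • x) x 1 := by
      simpa using (hasDerivAt_id (1 : ℝ)).smul_const x
    exact (one_smul ℝ x ▸ hf).comp_hasDerivAt 1 hline
  have hpow : HasDerivAt (fun t : ℝ => t ^ k • f x) (k • f x) 1 := by
    simpa using (Real.hasDerivAt_rpow_const (x := 1) (p := k) (Or.inl one_ne_zero)).smul_const (f x)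
  have heq : (fun t : ℝ => f (t • x)) =ᶠ[nhds 1] fun t => t ^ k • f x :=
    Filter.eventuallyEq_of_mem (Ioi_mem_nhds one_pos) hom
  exact hray.unique (hpow.congr_of_eventuallyEq heq)

end Euler

section Petviashvili

variable {E : Type u} [NormedAddCommGroup E] [InnerProductSpace ℝ E]

noncomputable def stabilizingFactor (L : E →L[ℝ] E) (N : E → E) (γ : ℝ) (x : E) : ℝ :=
  (⟪L x, x⟫ / ⟪N x, x⟫) ^ γ

noncomputable def petviashviliMap (L : E ≃L[ℝ] E) (N : E → E) (γ : ℝ) (x : E) : E :=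
  stabilizingFactor (L : E →L[ℝ] E) N γ x • L.symm (N x)

variable {p γ : ℝ} {N : E → E}

theorem inner_div_inner_smul_of_homogeneous (L : E →L[ℝ] E)
    (hN : ∀ t : ℝ, 0 < t → ∀ x : E, N (t • x) = t ^ p • N x) {t : ℝ} (ht : 0 < t) (x : E) :
    ⟪L (t • x), t • x⟫ / ⟪N (t • x), t • x⟫ = t ^ (1 - p) * (⟪L x, x⟫ / ⟪N x, x⟫) := by
  rw [map_smul, hN t ht, real_inner_smul_left, real_inner_smul_right, real_inner_smul_left,
    real_inner_smul_right, ← mul_assoc, ← mul_assoc, mul_div_mul_comm, Real.rpow_sub ht,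
    Real.rpow_one, mul_comm (t ^ p) t, mul_div_mul_left _ _ ht.ne']

theorem stabilizingFactor_smul_of_homogeneous (L : E →L[ℝ] E)
    (hN : ∀ t : ℝ, 0 < t → ∀ x : E, N (t • x) = t ^ p • N x) {x : E}
    (hx : 0 ≤ ⟪L x, x⟫ / ⟪N x, x⟫) {t : ℝ} (ht : 0 < t) :
    stabilizingFactor L N γ (t • x) = t ^ ((1 - p) * γ) * stabilizingFactor L N γ x := by
  rw [stabilizingFactor, inner_div_inner_smul_of_homogeneous L hN ht,
    Real.mul_rpow (Real.rpow_nonneg ht.le _) hx, ← Real.rpow_mul ht.le, stabilizingFactor]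

theorem petviashviliMap_smul_of_homogeneous (L : E ≃L[ℝ] E)
    (hN : ∀ t : ℝ, 0 < t → ∀ x : E, N (t • x) = t ^ p • N x) {x : E}
    (hx : 0 ≤ ⟪L x, x⟫ / ⟪N x, x⟫) {t : ℝ} (ht : 0 < t) :
    petviashviliMap L N γ (t • x) = t ^ (p + (1 - p) * γ) • petviashviliMap L N γ x := by
  rw [petviashviliMap, stabilizingFactor_smul_of_homogeneous (L : E →L[ℝ] E) hN hx ht, hN t ht,
    map_smul, smul_smul, mul_right_comm, ← Real.rpow_add ht, add_comm, petviashviliMap, smul_smul]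

theorem differentiableAt_petviashviliMap (L : E ≃L[ℝ] E) {x : E} (hN : DifferentiableAt ℝ N x)
    (hLx : ⟪L x, x⟫ ≠ 0) (hNx : ⟪N x, x⟫ ≠ 0) :
    DifferentiableAt ℝ (petviashviliMap L N γ) x := by
  have hquot : DifferentiableAt ℝ (fun y => ⟪(L : E →L[ℝ] E) y, y⟫ / ⟪N y, y⟫) x := by
    simp only [div_eq_mul_inv]
    exact ((L : E →L[ℝ] E).differentiableAt.inner ℝ differentiableAt_fun_id).mul
      ((hN.inner ℝ differentiableAt_fun_id).inv hNx)
  exact (hquot.rpow_const (Or.inl (div_ne_zero hLx hNx))).smul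
    ((L.symm : E →L[ℝ] E).differentiableAt.comp x hN)

theorem petviashviliMap_eq_self_of_fixed (L : E ≃L[ℝ] E) {u : E} (hu : L u = N u)
    (hNu : ⟪N u, u⟫ ≠ 0) : petviashviliMap L N γ u = u := by
  rw [petviashviliMap, stabilizingFactor, ContinuousLinearEquiv.coe_coe, ← hu,
    div_self (hu ▸ hNu), Real.one_rpow, one_smul]
  exact L.symm_apply_apply u

theorem fderiv_petviashviliMap_apply_self (L : E ≃L[ℝ] E)
    (hN : ∀ t : ℝ, 0 < t → ∀ x : E, N (t • x) = t ^ p • N x) {u : E}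
    (hdiff : DifferentiableAt ℝ N u) (hu : L u = N u) (hNu : ⟪N u, u⟫ ≠ 0) :
    fderiv ℝ (petviashviliMap L N γ) u u = (p + (1 - p) * γ) • u := by
  have hLu : ⟪L u, u⟫ ≠ 0 := hu ▸ hNu
  have hcone : 0 ≤ ⟪L u, u⟫ / ⟪N u, u⟫ := by rw [hu, div_self hNu]; exact zero_le_one
  rw [(differentiableAt_petviashviliMap L hdiff hLu hNu).hasFDerivAt.apply_self_eq_of_homogeneous
    fun t ht => petviashviliMap_smul_of_homogeneous L hN hcone ht,
    petviashviliMap_eq_self_of_fixed L hu hNu]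

end Petviashvili

/-- For the classical Petviashvili method with the optimal exponent `γ = p/(p-1)`, the
dominant eigenvalue `p` of the classical fixed-point iteration matrix is filtered to the
eigenvalue `0`: `(fderiv F u*) u* = 0`. -/
theorem petviashvili_optimal_exponent_filters_eigenvalue
    {E : Type*} [NormedAddCommGroup E] [InnerProductSpace ℝ E]
    (L : E ≃L[ℝ] E) (p : ℝ) (hp : p ≠ 1) (N : E → E)
    (hN : ∀ t : ℝ, 0 < t → ∀ x : E, N (t • x) = t ^ p • N x)
    (ustar : E) (hNdiff : DifferentiableAt ℝ N ustar)
    (hsol : L ustar = N ustar)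
    (hne : (inner ℝ (N ustar) ustar : ℝ) ≠ 0) :
    DifferentiableAt ℝ
      (fun x => (((inner ℝ (L x) x : ℝ) / (inner ℝ (N x) x : ℝ)) ^ (p / (p - 1))) •
        L.symm (N x)) ustar ∧
    fderiv ℝ
      (fun x => (((inner ℝ (L x) x : ℝ) / (inner ℝ (N x) x : ℝ)) ^ (p / (p - 1))) •
        L.symm (N x)) ustar ustar = 0 := by
  have heigen : p + (1 - p) * (p / (p - 1)) = 0 := by
    field_simp [sub_ne_zero.mpr hp]
    ring
  refine ⟨differentiableAt_petviashviliMap L hNdiff (hsol ▸ hne) hne, ?_⟩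
  change fderiv ℝ (petviashviliMap L N (p / (p - 1))) ustar ustar = 0
  rw [fderiv_petviashviliMap_apply_self L hN hNdiff hsol hne, heigen, zero_smul]
end

section
/- Let K be a field, V a finite-dimensional K-vector space, A : V →ₗ[K] V a linear endomorphism, w : V →ₗ[K] K a linear functional, u ∈ V with u ≠ 0, and p, q ∈ K with A u = p • u and w(u) = q. Define the rank-one perturbation B : V →ₗ[K] V by B x = A x + (w x) • u. Then: (a) B u = (p + q) • u, so p + q is an eigenvalue of B with eigenvector u; and (b) every eigenvalue μ of B with μ ≠ p + q is an eigenvalue of A. (This is the spectral filtering property: the eigenvalue p of the classical iteration matrix is moved to p + q, while the rest of the spectrum of the Petviashvili-type iteration matrix is contained in the spectrum of the classical iteration matrix.) -/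
/-- Spectral filtering property of a rank-one perturbation `B x = A x + (w x) • u` where
`A u = p • u` and `w u = q`: (a) `B u = (p + q) • u`, and (b) every eigenvalue `μ ≠ p + q`
of `B` is an eigenvalue of `A`. -/
theorem rank_one_perturbation_spectral_filtering
    {K V : Type*} [Field K] [AddCommGroup V] [Module K V] [FiniteDimensional K V]
    (A : V →ₗ[K] V) (w : V →ₗ[K] K) (u : V) (hu : u ≠ 0) (p q : K)
    (hAu : A u = p • u) (hwu : w u = q) :
    (A + w.smulRight u) u = (p + q) • u ∧
    ∀ μ : K, Module.End.HasEigenvalue (A + w.smulRight u) μ → μ ≠ p + q →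
      Module.End.HasEigenvalue A μ := by
  constructor
  · simp [LinearMap.smulRight_apply, hAu, hwu, add_smul]
  · intro μ hμ hne
    obtain ⟨v, hv⟩ := hμ.exists_hasEigenvector
    have hveq : A v + (w v) • u = μ • v := by
      have := hv.apply_eq_smul
      simpa [LinearMap.smulRight_apply] using this
    have hv0 : v ≠ 0 := hv.2
    by_cases hwv : w v = 0
    · exact Module.End.hasEigenvalue_of_hasEigenvector
        ⟨by rw [Module.End.mem_eigenspace_iff]; simpa [hwv] using hveq, hv0⟩
    · by_cases hμp : μ = p
      · subst hμp
        exact Module.End.hasEigenvalue_of_hasEigenvector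
          ⟨by rw [Module.End.mem_eigenspace_iff]; exact hAu, hu⟩
      · set t : K := (w v) / (μ - p) with ht
        have hsub : μ - p ≠ 0 := sub_ne_zero.mpr hμp
        have hvt : v - t • u ≠ 0 := by
          intro h
          have hv' : v = t • u := by rwa [sub_eq_zero] at h
          have ht0 : t ≠ 0 := by
            intro h0; exact hv0 (by rw [hv', h0, zero_smul])
          -- B v = μ v and v = t u gives μ = p + q
          have hBu : A (t • u) + (w (t • u)) • u = μ • (t • u) := by
            rw [← hv']; exact hveq
          rw [map_smul, map_smul, hAu, hwu] at hBu
          have h2 : (t * p + t * q) • u = (μ * t) • u := by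
            simpa [add_smul, smul_smul, smul_eq_mul] using hBu
          have h3 : t * p + t * q - μ * t = 0 := by
            have h4 : (t * p + t * q - μ * t) • u = 0 := by
              rw [sub_smul, h2, sub_self]
            exact (smul_eq_zero.mp h4).resolve_right hu
          exact hne (mul_left_cancel₀ ht0 (by linear_combination -h3) : μ = p + q)
        have hgoal : A (v - t • u) = μ • (v - t • u) := by
          have hAv : A v = μ • v - (w v) • u := by
            rw [← hveq]; abel
          have htw : t * (μ - p) = w v := div_mul_cancel₀ _ hsub
          rw [map_sub, map_smul, hAu, hAv, ← htw]
          match_scalars <;> ring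
        exact Module.End.hasEigenvalue_of_hasEigenvector
          ⟨by rw [Module.End.mem_eigenspace_iff]; exact hgoal, hvt⟩
end
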